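/- Let (M, Σ, π₁, π₂) be a CP monoid. The map sending a pair (f,g) ∈ M² with fg = 1 to the triple (gΣ, π₁f, π₂f), and the map sending a triple (Φ, τ₁, τ₂) making (M, Φ, τ₁, τ₂) a CQP monoid to (Σ(τ₁,τ₂), Φ(π₁,π₂)), are mutually inverse bijections between {(f,g) ∈ M² : fg = 1} and the set of CQP structures on M; this bijection restricts to a bijection between {(u, u⁻¹) : u a unit of M} and the set of CP structures on M. -/
import Mathlib


/-- A categorical quasiproduct structure on a monoid. -/
def IsCQP {M : Type*} [Monoid M] (Sg : M → M → M) (π₁ π₂ : M) : Prop :=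
  (∀ a b, π₁ * Sg a b = a) ∧ (∀ a b, π₂ * Sg a b = b) ∧
    (∀ a b c, Sg (a * c) (b * c) = Sg a b * c)

/-- A categorical product structure on a monoid: a CQP structure with
`Σ(π₁,π₂) = 1`. -/
def IsCP {M : Type*} [Monoid M] (Sg : M → M → M) (π₁ π₂ : M) : Prop :=
  IsCQP Sg π₁ π₂ ∧ Sg π₁ π₂ = 1

/-- For a CP monoid `(M, Σ, π₁, π₂)`, the assignments
`(f,g) ↦ (g·Σ, π₁f, π₂f)` and `(Φ,τ₁,τ₂) ↦ (Σ(τ₁,τ₂), Φ(π₁,π₂))` are mutually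
inverse bijections between pairs `(f,g)` with `fg = 1` and CQP structures on
`M`; this bijection restricts to one between pairs `(u, u⁻¹)` with `u` a unit
and CP structures on `M`. -/
theorem cp_structures_bijection {M : Type*} [Monoid M] (Sg : M → M → M)
    (π₁ π₂ : M) (h : IsCP Sg π₁ π₂) :
    ∃ (F : {fg : M × M // fg.1 * fg.2 = 1} →
          {t : (M → M → M) × M × M // IsCQP t.1 t.2.1 t.2.2})
      (G : {t : (M → M → M) × M × M // IsCQP t.1 t.2.1 t.2.2} →
          {fg : M × M // fg.1 * fg.2 = 1}),
      (∀ x, (F x).val =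
        (fun a b => x.val.2 * Sg a b, π₁ * x.val.1, π₂ * x.val.1)) ∧
      (∀ t, (G t).val = (Sg t.val.2.1 t.val.2.2, t.val.1 π₁ π₂)) ∧
      Function.LeftInverse G F ∧ Function.RightInverse G F ∧
      (∀ x, x.val.2 * x.val.1 = 1 ↔
        IsCP (F x).val.1 (F x).val.2.1 (F x).val.2.2) := by
  obtain ⟨⟨h1, h2, h3⟩, h4⟩ := h
  refine ⟨fun x => ⟨(fun a b => x.val.2 * Sg a b, π₁ * x.val.1, π₂ * x.val.1),
      ?_, ?_, ?_⟩,
    fun t => ⟨(Sg t.val.2.1 t.val.2.2, t.val.1 π₁ π₂), ?_⟩,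
    fun _ => rfl, fun _ => rfl, ?_, ?_, ?_⟩
  · intro a b
    rw [mul_assoc, ← mul_assoc x.val.1, x.property, one_mul, h1]
  · intro a b
    rw [mul_assoc, ← mul_assoc x.val.1, x.property, one_mul, h2]
  · intro a b c
    show x.val.2 * Sg (a * c) (b * c) = x.val.2 * Sg a b * c
    rw [h3, mul_assoc]
  · obtain ⟨t1, t2, t3⟩ := t.property
    calc Sg t.val.2.1 t.val.2.2 * t.val.1 π₁ π₂
        = Sg (t.val.2.1 * t.val.1 π₁ π₂) (t.val.2.2 * t.val.1 π₁ π₂) :=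
          (h3 _ _ _).symm
      _ = Sg π₁ π₂ := by rw [t1, t2]
      _ = 1 := h4
  · intro x
    apply Subtype.ext
    apply Prod.ext
    · show Sg (π₁ * x.val.1) (π₂ * x.val.1) = x.val.1
      rw [h3, h4, one_mul]
    · show x.val.2 * Sg π₁ π₂ = x.val.2
      rw [h4, mul_one]
  · intro t
    obtain ⟨t1, t2, t3⟩ := t.property
    apply Subtype.ext
    apply Prod.ext
    · funext a b
      show t.val.1 π₁ π₂ * Sg a b = t.val.1 a b
      rw [← t3, h1, h2]
    · apply Prod.ext
      · exact h1 _ _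
      · exact h2 _ _
  · intro x
    constructor
    · intro hx
      refine ⟨⟨?_, ?_, ?_⟩, ?_⟩
      · intro a b
        show π₁ * x.val.1 * (x.val.2 * Sg a b) = a
        rw [mul_assoc, ← mul_assoc x.val.1, x.property, one_mul, h1]
      · intro a b
        show π₂ * x.val.1 * (x.val.2 * Sg a b) = b
        rw [mul_assoc, ← mul_assoc x.val.1, x.property, one_mul, h2]
      · intro a b c
        show x.val.2 * Sg (a * c) (b * c) = x.val.2 * Sg a b * c
        rw [h3, mul_assoc]
      · show x.val.2 * Sg (π₁ * x.val.1) (π₂ * x.val.1) = 1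
        rw [h3, h4, one_mul, hx]
    · intro hcp
      have := hcp.2
      simp only at this
      rw [h3, h4, one_mul] at this
      exact this
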